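/- Let d be a positive integer and a, b natural numbers. Call F ∈ ℂ⟦x,y⟧ invariant if F_{i,j} = 0 whenever d does not divide a·i + b·j. Let f, g ∈ ℂ⟦x,y⟧ be invariant, and suppose f is y-general of order k, i.e., f_{0,j} = 0 for all j < k and f_{0,k} ≠ 0. If Q, R ∈ ℂ⟦x,y⟧ satisfy g = Q·f + R, where R_{i,j} = 0 for all j ≥ k (i.e., R is a polynomial in y of degree < k), then Q and R are also invariant: Q_{i,j} = 0 and R_{i,j} = 0 whenever d ∤ (a·i + b·j). In other words, Weierstrass division can be performed inside the invariant ring ℂ⟦x,y⟧^{G_d}. -/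

import Mathlib

/-!
The weights `(a, b)` grade `ℂ⟦x, y⟧` by `ZMod d`, and invariance means homogeneity of degree `0`.
Multiplication by the invariant `f` commutes with the projection `P` onto degree `0`, so applying
`P` to `g = Q * f + R` gives `g = P Q * f + P R`. Subtracting, `(Q - P Q) * f + (R - P R) = 0` is a
Weierstrass division of `0` by `f`, and uniqueness of Weierstrass division forces `Q = P Q` and
`R = P R`.
-/

open Finsupp MvPowerSeries

namespace MvPowerSeries

section Weight

variable {σ M : Type*} [AddCommMonoid M]

def IsHomogeneousOfWeight {R : Type*} [Semiring R] (w : σ → M) (f : MvPowerSeries σ R) (m : M) :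
    Prop :=
  ∀ ⦃n : σ →₀ ℕ⦄, weight w n ≠ m → coeff n f = 0

variable [DecidableEq M] {w : σ → M} {m : M}

section Semiring

variable {R : Type*} [CommSemiring R]

noncomputable def componentOfWeight (w : σ → M) (m : M) (f : MvPowerSeries σ R) :
    MvPowerSeries σ R :=
  fun n ↦ if weight w n = m then coeff n f else 0

@[simp]
theorem coeff_componentOfWeight (n : σ →₀ ℕ) (f : MvPowerSeries σ R) :
    coeff n (componentOfWeight w m f) = if weight w n = m then coeff n f else 0 :=
  rfl

theorem componentOfWeight_add (f g : MvPowerSeries σ R) :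
    componentOfWeight w m (f + g) = componentOfWeight w m f + componentOfWeight w m g := by
  ext n
  simp only [coeff_componentOfWeight, map_add]
  split_ifs <;> simp

theorem isHomogeneousOfWeight_iff_componentOfWeight_eq {f : MvPowerSeries σ R} :
    IsHomogeneousOfWeight w f m ↔ componentOfWeight w m f = f := by
  refine ⟨fun hf ↦ ext fun n ↦ ?_, fun hf n hn ↦ ?_⟩
  · rw [coeff_componentOfWeight]
    split_ifs with hn
    · rfl
    · exact (hf hn).symm
  · rw [← hf, coeff_componentOfWeight, if_neg hn]

theorem componentOfWeight_mul_of_isHomogeneousOfWeight [IsRightCancelAdd M]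
    {f : MvPowerSeries σ R} {h : M} (hf : IsHomogeneousOfWeight w f h) (F : MvPowerSeries σ R) :
    componentOfWeight w (m + h) (F * f) = componentOfWeight w m F * f := by
  classical
  ext n
  rw [coeff_componentOfWeight, coeff_mul, coeff_mul, ← Finset.sum_const_zero,
    ← Finset.sum_ite_irrel]
  refine Finset.sum_congr rfl fun p hp ↦ ?_
  by_cases hp₂ : weight w p.2 = h
  · rw [← Finset.HasAntidiagonal.mem_antidiagonal.mp hp, map_add, hp₂, coeff_componentOfWeight]
    simp only [add_left_inj]
    split_ifs <;> simp
  · rw [coeff_componentOfWeight, hf hp₂]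
    simp

end Semiring

theorem sub_componentOfWeight_mul_eq {R : Type*} [CommRing R] [IsRightCancelAdd M]
    {f g q r : MvPowerSeries σ R} (hf : IsHomogeneousOfWeight w f 0)
    (hg : IsHomogeneousOfWeight w g 0) (hdiv : g = q * f + r) :
    (q - componentOfWeight w 0 q) * f = -(r - componentOfWeight w 0 r) := by
  have hmul : componentOfWeight w 0 (q * f) = componentOfWeight w 0 q * f := by
    simpa using componentOfWeight_mul_of_isHomogeneousOfWeight (m := 0) hf q
  have hdiv₀ := congrArg (componentOfWeight w 0) hdiv
  rw [isHomogeneousOfWeight_iff_componentOfWeight_eq.mp hg, componentOfWeight_add, hmul] at hdiv₀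
  linear_combination hdiv₀ - hdiv

end Weight

theorem eq_zero_of_coeff_mul_eq_zero_of_le_degree {σ R : Type*} [CommSemiring R]
    [NoZeroDivisors R] {a f : MvPowerSeries σ R} {k : ℕ} (hf : f.order = k)
    (h : ∀ n, k ≤ degree n → coeff n (a * f) = 0) : a = 0 := by
  have hf₀ : f ≠ 0 := by
    rintro rfl
    simp at hf
  refine (mul_eq_zero.mp (ext fun n ↦ ?_)).resolve_right hf₀
  rw [map_zero]
  by_cases hn : k ≤ degree n
  · exact h n hn
  · refine coeff_of_lt_order ?_
    rw [order_mul, hf]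
    calc ((degree n : ℕ) : ℕ∞) < k := by exact_mod_cast not_le.mp hn
      _ ≤ a.order + k := le_add_self

end MvPowerSeries

theorem PowerSeries.eq_zero_of_forall_coeff_mul_mem {A : Type*} [CommSemiring A]
    {q f : PowerSeries A} {S : Set A} (hS : ∀ a, a * constantCoeff f ∈ S → a = 0)
    (h : ∀ n, coeff n (q * f) ∈ S) : q = 0 := by
  by_contra hq
  refine constantCoeff_divXPowOrder_eq_zero_iff.not.mpr hq (hS _ ?_)
  have hcoeff : constantCoeff q.divXPowOrder * constantCoeff f =
      coeff q.order.toNat (X ^ q.order.toNat * q.divXPowOrder * f) := by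
    rw [mul_assoc, coeff_X_pow_mul', if_pos le_rfl, Nat.sub_self,
      coeff_zero_eq_constantCoeff, map_mul]
  rw [hcoeff, X_pow_order_mul_divXPowOrder]
  exact h _

theorem Finsupp.eq_single_zero_degree (n : Fin 1 →₀ ℕ) : n = single 0 n.degree := by
  rw [unique_single n, degree_single]
  rfl

theorem Finsupp.cons_single_zero (i j : ℕ) :
    cons i (single (0 : Fin 1) j) = single (0 : Fin 2) i + single 1 j := by
  ext x
  fin_cases x
  · simp
  · simpa using cons_succ (0 : Fin 1) i (single 0 j)

theorem Finsupp.single_zero_add_single_one (n : Fin 2 →₀ ℕ) :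
    single 0 (n 0) + single 1 (n 1) = n := by
  ext x
  fin_cases x <;> simp

namespace MvPowerSeries

variable {R : Type*} [CommSemiring R]

/- Read `q, f, r` as power series in `x` over `R⟦y⟧`: the lowest nonzero `x`-coefficient of `q`
would multiply `f(0, y)`, of `y`-order `k`, into a polynomial in `y` of degree `< k`. -/
theorem eq_zero_of_mul_eq_of_yGeneral [NoZeroDivisors R] {k : ℕ}
    {q f r : MvPowerSeries (Fin 2) R} (hf₁ : ∀ j < k, coeff (single 1 j) f = 0)
    (hf₂ : coeff (single 1 k) f ≠ 0)
    (hr : ∀ i j, k ≤ j → coeff (single 0 i + single 1 j) r = 0) (h : q * f = r) : q = 0 := by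
  set φ := finSuccEquiv R 1
  have hcoeff (p : MvPowerSeries (Fin 2) R) (i j : ℕ) :
      coeff (single 0 j) (PowerSeries.coeff i (φ p)) = coeff (single 0 i + single 1 j) p := by
    rw [coeff_coeff_finSuccEquiv, cons_single_zero]
  have hf₀ : (PowerSeries.constantCoeff (φ f)).order = k := by
    refine order_eq_nat.mpr ⟨⟨single 0 k, ?_, degree_single _ _⟩, fun n hn ↦ ?_⟩
    · rw [← PowerSeries.coeff_zero_eq_constantCoeff_apply, hcoeff]
      simpa using hf₂
    · rw [eq_single_zero_degree n, ← PowerSeries.coeff_zero_eq_constantCoeff_apply, hcoeff]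
      simpa using hf₁ _ hn
  rw [← map_eq_zero_iff φ φ.injective]
  refine PowerSeries.eq_zero_of_forall_coeff_mul_mem
    (S := {a | ∀ n, k ≤ degree n → coeff n a = 0})
    (fun a ha ↦ eq_zero_of_coeff_mul_eq_zero_of_le_degree hf₀ ha) fun i n hn ↦ ?_
  rw [← map_mul, h, eq_single_zero_degree n, hcoeff]
  exact hr i _ (by simpa using hn)

theorem isHomogeneousOfWeight_zmod_iff {d a b : ℕ} {F : MvPowerSeries (Fin 2) R} :
    IsHomogeneousOfWeight ![(a : ZMod d), (b : ZMod d)] F 0 ↔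
      ∀ i j : ℕ, ¬ d ∣ (a * i + b * j) → coeff (single 0 i + single 1 j) F = 0 := by
  have hw (i j : ℕ) : weight ![(a : ZMod d), (b : ZMod d)] (single 0 i + single 1 j) =
      ((a * i + b * j : ℕ) : ZMod d) := by
    rw [map_add, weight_single, weight_single]
    push_cast
    simp [nsmul_eq_mul, mul_comm]
  refine ⟨fun hF i j hij ↦ hF ?_, fun hF n hn ↦ ?_⟩
  · rwa [hw, ne_eq, ZMod.natCast_eq_zero_iff]
  · rw [← single_zero_add_single_one n] at hn ⊢
    rw [hw, ne_eq, ZMod.natCast_eq_zero_iff] at hn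
    exact hF _ _ hn

end MvPowerSeries

theorem weierstrass_division_invariant_general (d : ℕ) (a b : ℕ)
    (f g Q R : MvPowerSeries (Fin 2) ℂ) (k : ℕ)
    (hfinv : ∀ i j : ℕ, ¬ d ∣ (a * i + b * j) →
      MvPowerSeries.coeff (Finsupp.single (0 : Fin 2) i + Finsupp.single 1 j) f = 0)
    (hginv : ∀ i j : ℕ, ¬ d ∣ (a * i + b * j) →
      MvPowerSeries.coeff (Finsupp.single (0 : Fin 2) i + Finsupp.single 1 j) g = 0)
    (hfgen₁ : ∀ j < k, MvPowerSeries.coeff (Finsupp.single (1 : Fin 2) j) f = 0)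
    (hfgen₂ : MvPowerSeries.coeff (Finsupp.single (1 : Fin 2) k) f ≠ 0)
    (hdiv : g = Q * f + R)
    (hR : ∀ i j : ℕ, k ≤ j →
      MvPowerSeries.coeff (Finsupp.single (0 : Fin 2) i + Finsupp.single 1 j) R = 0) :
    (∀ i j : ℕ, ¬ d ∣ (a * i + b * j) →
      MvPowerSeries.coeff (Finsupp.single (0 : Fin 2) i + Finsupp.single 1 j) Q = 0) ∧
    (∀ i j : ℕ, ¬ d ∣ (a * i + b * j) →
      MvPowerSeries.coeff (Finsupp.single (0 : Fin 2) i + Finsupp.single 1 j) R = 0) := by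
  have hQR := sub_componentOfWeight_mul_eq (isHomogeneousOfWeight_zmod_iff.mpr hfinv)
    (isHomogeneousOfWeight_zmod_iff.mpr hginv) hdiv
  have hQ := eq_zero_of_mul_eq_of_yGeneral hfgen₁ hfgen₂ (fun i j hj ↦ by
    rw [map_neg, map_sub, coeff_componentOfWeight, hR i j hj, ite_self, sub_zero, neg_zero]) hQR
  rw [hQ, zero_mul, eq_comm, neg_eq_zero] at hQR
  simp only [← isHomogeneousOfWeight_zmod_iff (d := d),
    isHomogeneousOfWeight_iff_componentOfWeight_eq]
  exact ⟨(sub_eq_zero.mp hQ).symm, (sub_eq_zero.mp hQR).symm⟩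

/-- Remark 4.13 (formal version): Weierstrass division can be performed inside the invariant
ring `ℂ⟦x,y⟧^{G_d}`. A series `F ∈ ℂ⟦x,y⟧` is invariant under the action
`ξ·(x,y) = (ξ^a x, ξ^b y)` of the `d`-th roots of unity exactly when `F_{i,j} = 0`
whenever `d ∤ (a·i + b·j)`. Suppose `f, g` are invariant and `f` is `y`-general of
order `k`. If `g = Q·f + R` with `R` a polynomial in `y` of degree `< k`, then `Q` and `R`
are also invariant. -/
theorem weierstrass_division_invariant (d : ℕ) (hd : 0 < d) (a b : ℕ)
    (f g Q R : MvPowerSeries (Fin 2) ℂ) (k : ℕ)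
    (hfinv : ∀ i j : ℕ, ¬ d ∣ (a * i + b * j) →
      MvPowerSeries.coeff (Finsupp.single (0 : Fin 2) i + Finsupp.single 1 j) f = 0)
    (hginv : ∀ i j : ℕ, ¬ d ∣ (a * i + b * j) →
      MvPowerSeries.coeff (Finsupp.single (0 : Fin 2) i + Finsupp.single 1 j) g = 0)
    (hfgen₁ : ∀ j < k, MvPowerSeries.coeff (Finsupp.single (1 : Fin 2) j) f = 0)
    (hfgen₂ : MvPowerSeries.coeff (Finsupp.single (1 : Fin 2) k) f ≠ 0)
    (hdiv : g = Q * f + R)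
    (hR : ∀ i j : ℕ, k ≤ j →
      MvPowerSeries.coeff (Finsupp.single (0 : Fin 2) i + Finsupp.single 1 j) R = 0) :
    (∀ i j : ℕ, ¬ d ∣ (a * i + b * j) →
      MvPowerSeries.coeff (Finsupp.single (0 : Fin 2) i + Finsupp.single 1 j) Q = 0) ∧
    (∀ i j : ℕ, ¬ d ∣ (a * i + b * j) →
      MvPowerSeries.coeff (Finsupp.single (0 : Fin 2) i + Finsupp.single 1 j) R = 0) :=
  weierstrass_division_invariant_general d a b f g Q R k hfinv hginv hfgen₁ hfgen₂ hdiv hR
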